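/- Let α ∈ (0,1] and let y be given on (x₀, ∞) by the convergent fractional power series y(x) = ∑_{k≥0} c_k·(x − x₀)^((k+s)α) with radius of convergence ρ^α (in the variable u = (x−x₀)^α). Then for x ∈ (x₀, x₀+ρ), y is α-differentiable based at x₀ term by term: T_α^{x₀}y(x) = ∑_{k≥0} c_k·α·(k+s)·(x − x₀)^((k+s−1)α). -/

import Mathlib

/-!
On `(x₀, x₀ + ρ)` every term `c k * (x - x₀) ^ ((k + s) * α)` is differentiable, and on a compact
subinterval its derivative is dominated by `(k + |s|) |c k| r ^ k` with `r < ρ ^ α`, which is summable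
because the coefficients of a power series converging at some `R > r` satisfy `|c k| R ^ k = O(1)`.
So the series may be differentiated term by term; for a differentiable function the conformable
derivative is the ordinary one times `(x - x₀) ^ (1 - α)`, which turns each term into the stated one.
-/

open Filter Topology Real

/-- Left conformable fractional derivative of order `α` based at `x₀`:
`(T_α^{x₀} f)(x) = lim_{ε→0} (f(x + ε(x−x₀)^(1−α)) − f(x))/ε`. -/
def HasConfDerivAtBase (x₀ α : ℝ) (f : ℝ → ℝ) (L x : ℝ) : Prop :=
  Tendsto (fun ε : ℝ => (f (x + ε * (x - x₀) ^ (1 - α)) - f x) / ε) (𝓝[≠] 0) (𝓝 L)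

theorem HasDerivAt.tendsto_slope_along {f : ℝ → ℝ} {f' x : ℝ} (hf : HasDerivAt f f' x) (h : ℝ) :
    Tendsto (fun ε : ℝ => (f (x + ε * h) - f x) / ε) (𝓝[≠] 0) (𝓝 (f' * h)) := by
  have hline : HasDerivAt (fun ε : ℝ => x + ε * h) h 0 := by
    simpa using ((hasDerivAt_id (0 : ℝ)).mul_const h).const_add x
  simpa [div_eq_inv_mul, mul_comm h] using
    hasDerivAt_iff_tendsto_slope_zero.1 (hf.scomp_of_eq 0 hline (by simp))

theorem HasDerivAt.hasConfDerivAtBase {f : ℝ → ℝ} {f' x : ℝ} (hf : HasDerivAt f f' x)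
    (x₀ α : ℝ) : HasConfDerivAtBase x₀ α f (f' * (x - x₀) ^ (1 - α)) x :=
  hf.tendsto_slope_along _

theorem rpow_natCast_mul_add {w : ℝ} (hw : 0 < w) (k : ℕ) (α p : ℝ) :
    w ^ (k * α + p) = (w ^ α) ^ k * w ^ p := by
  rw [rpow_add hw, mul_comm (k : ℝ), rpow_mul hw.le, rpow_natCast]

theorem summable_pow_mul_abs_mul_pow {c : ℕ → ℝ} {r R : ℝ} (m : ℕ) (hr : 0 ≤ r) (hrR : r < R)
    (hc : Summable fun k => c k * R ^ k) :
    Summable fun k : ℕ => (k : ℝ) ^ m * |c k| * r ^ k := by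
  have hR : 0 < R := hr.trans_lt hrR
  obtain ⟨C, hC⟩ : ∃ C, ∀ k, |c k| * R ^ k ≤ C := by
    obtain ⟨C, hC⟩ := hc.tendsto_atTop_zero.abs.bddAbove_range
    exact ⟨C, fun k => by simpa [abs_mul, abs_of_pos hR] using hC (Set.mem_range_self k)⟩
  have hq : ‖r / R‖ < 1 := by
    rwa [norm_div, Real.norm_of_nonneg hr, Real.norm_of_nonneg hR.le, div_lt_one hR]
  refine .of_nonneg_of_le (fun k => by positivity) (fun k => ?_)
    ((summable_pow_mul_geometric_of_norm_lt_one m hq).mul_left C)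
  calc (k : ℝ) ^ m * |c k| * r ^ k = (|c k| * R ^ k) * ((k : ℝ) ^ m * (r / R) ^ k) := by
        rw [div_pow]; field_simp
    _ ≤ C * ((k : ℝ) ^ m * (r / R) ^ k) := by gcongr; exact hC k

section FractionalPowerSeries

variable {α s w : ℝ} {c : ℕ → ℝ}

theorem summable_mul_rpow_of_summable_pow (hw : 0 < w)
    (hc : Summable fun k => c k * (w ^ α) ^ k) :
    Summable fun k : ℕ => c k * w ^ (((k : ℝ) + s) * α) := by
  refine (hc.mul_right (w ^ (s * α))).congr fun k => ?_
  simp only [add_mul, rpow_natCast_mul_add hw]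
  ring

theorem norm_mul_deriv_rpow_le {r M : ℝ} (hα : 0 < α) (hw : 0 < w) (hwr : w ^ α ≤ r)
    (hM : ‖w ^ (s * α - 1)‖ ≤ M) (k : ℕ) :
    ‖c k * (((k : ℝ) + s) * α * w ^ (((k : ℝ) + s) * α - 1))‖ ≤
      α * M * (k * |c k| * r ^ k + |s| * (|c k| * r ^ k)) := by
  rw [show ((k : ℝ) + s) * α - 1 = k * α + (s * α - 1) by ring, rpow_natCast_mul_add hw]
  calc ‖c k * (((k : ℝ) + s) * α * ((w ^ α) ^ k * w ^ (s * α - 1)))‖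
      = |c k| * |(k : ℝ) + s| * α * (w ^ α) ^ k * ‖w ^ (s * α - 1)‖ := by
        simp only [Real.norm_eq_abs, abs_mul, abs_pow, abs_of_pos hα,
          abs_of_pos (rpow_pos_of_pos hw α)]
        ring
    _ ≤ |c k| * ((k : ℝ) + |s|) * α * r ^ k * M := by
        have hr : 0 ≤ r := (rpow_pos_of_pos hw α).le.trans hwr
        gcongr
        simpa using abs_add_le (k : ℝ) s
    _ = _ := by ring

theorem hasDerivAt_tsum_mul_sub_rpow {x₀ ρ x : ℝ} (hα : 0 < α)
    (hrad : ∀ u : ℝ, |u| < ρ ^ α → Summable (fun k : ℕ => c k * u ^ k))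
    (hx : x ∈ Set.Ioo x₀ (x₀ + ρ)) :
    HasDerivAt (fun z => ∑' k : ℕ, c k * (z - x₀) ^ (((k : ℝ) + s) * α))
      (∑' k : ℕ, c k * (((k : ℝ) + s) * α * (x - x₀) ^ (((k : ℝ) + s) * α - 1))) x := by
  obtain ⟨a, hx₀a, hax⟩ := exists_between hx.1
  obtain ⟨b, hxb, hbρ⟩ := exists_between hx.2
  set r := (b - x₀) ^ α
  have hr0 : 0 ≤ r := (rpow_pos_of_pos (by linarith) α).le
  obtain ⟨R, hrR, hRρ⟩ : ∃ R, r < R ∧ R < ρ ^ α :=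
    exists_between (rpow_lt_rpow (by linarith) (by linarith) hα)
  have hcR : Summable fun k => c k * R ^ k := hrad R (by rwa [abs_of_pos (hr0.trans_lt hrR)])
  obtain ⟨M, hM⟩ : ∃ M, ∀ z ∈ Set.Icc a b, ‖(z - x₀) ^ (s * α - 1)‖ ≤ M :=
    isCompact_Icc.exists_bound_of_continuousOn <| (continuousOn_id.sub continuousOn_const).rpow_const
      fun z hz => Or.inl (sub_pos.2 (hx₀a.trans_le hz.1)).ne'
  have hU : Summable fun k : ℕ => α * M * (k * |c k| * r ^ k + |s| * (|c k| * r ^ k)) := by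
    simpa using ((summable_pow_mul_abs_mul_pow 1 hr0 hrR hcR).add
      ((summable_pow_mul_abs_mul_pow 0 hr0 hrR hcR).mul_left |s|)).mul_left (α * M)
  have hx' : x ∈ Set.Ioo a b := ⟨hax, hxb⟩
  refine hasDerivAt_tsum_of_isPreconnected (g := fun k z => c k * (z - x₀) ^ (((k : ℝ) + s) * α))
    (g' := fun k z => c k * (((k : ℝ) + s) * α * (z - x₀) ^ (((k : ℝ) + s) * α - 1)))
    hU isOpen_Ioo isPreconnected_Ioo (fun k z hz => ?_) (fun k z hz => ?_) hx' ?_ hx'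
  · simpa using (((hasDerivAt_id z).sub_const x₀).rpow_const
      (Or.inl (sub_pos.2 (hx₀a.trans hz.1)).ne')).const_mul (c k)
  · have hw : 0 < z - x₀ := by linarith [hz.1]
    exact norm_mul_deriv_rpow_le hα hw (rpow_le_rpow hw.le (by linarith [hz.2]) hα.le)
      (hM z (Set.Ioo_subset_Icc_self hz)) k
  · have hw : 0 < x - x₀ := sub_pos.2 hx.1
    refine summable_mul_rpow_of_summable_pow hw (hrad _ ?_)
    rw [abs_of_pos (rpow_pos_of_pos hw α)]
    exact rpow_lt_rpow hw.le (by linarith [hx.2]) hα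

end FractionalPowerSeries

theorem conf_deriv_term_by_term_general (x₀ α s ρ : ℝ) (c : ℕ → ℝ) (y : ℝ → ℝ)
    (hα : 0 < α)
    (hrad : ∀ u : ℝ, |u| < ρ ^ α → Summable (fun k : ℕ => c k * u ^ k))
    (hy : ∀ x ∈ Set.Ioo x₀ (x₀ + ρ),
      y x = ∑' k : ℕ, c k * (x - x₀) ^ (((k : ℝ) + s) * α)) :
    ∀ x ∈ Set.Ioo x₀ (x₀ + ρ),
      HasConfDerivAtBase x₀ α y
        (∑' k : ℕ, c k * α * ((k : ℝ) + s) * (x - x₀) ^ (((k : ℝ) + s - 1) * α)) x := by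
  intro x hx
  have hderiv := (hasDerivAt_tsum_mul_sub_rpow hα hrad hx).congr_of_eventuallyEq
    (eventually_of_mem (Ioo_mem_nhds hx.1 hx.2) hy)
  convert hderiv.hasConfDerivAtBase x₀ α using 1
  rw [← tsum_mul_right]
  refine tsum_congr fun k => ?_
  rw [show ((k : ℝ) + s - 1) * α = ((k + s) * α - 1) + (1 - α) by ring, rpow_add (sub_pos.2 hx.1)]
  ring

theorem conf_deriv_term_by_term (x₀ α s ρ : ℝ) (c : ℕ → ℝ) (y : ℝ → ℝ)
    (hα : 0 < α) (hα1 : α ≤ 1) (hρ : 0 < ρ)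
    (hrad : ∀ u : ℝ, |u| < ρ ^ α → Summable (fun k : ℕ => c k * u ^ k))
    (hy : ∀ x ∈ Set.Ioo x₀ (x₀ + ρ),
      y x = ∑' k : ℕ, c k * (x - x₀) ^ (((k : ℝ) + s) * α)) :
    ∀ x ∈ Set.Ioo x₀ (x₀ + ρ),
      HasConfDerivAtBase x₀ α y
        (∑' k : ℕ, c k * α * ((k : ℝ) + s) * (x - x₀) ^ (((k : ℝ) + s - 1) * α)) x :=
  conf_deriv_term_by_term_general x₀ α s ρ c y hα hrad hy
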